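/- arXiv:1805.04896 — 2 statements merged into one kernel-verified Lean document; each statement's English description precedes it below -/
import Mathlib

section
/- Suppose ⟨e,ρ⟩ = −1 and ⟨ẽ,ρ̃⟩ = −1 (i.e. e and ẽ are Demazure roots with associated rays ρ and ρ̃) and φ, φ̃ ∈ F are nonzero. Then the vertical-type derivations D_{e,ρ,φ} and D_{ẽ,ρ̃,φ̃} commute on B (i.e. D_{e,ρ,φ}∘D_{ẽ,ρ̃,φ̃} = D_{ẽ,ρ̃,φ̃}∘D_{e,ρ,φ}) if and only if one of the following conditions holds: (1) ⟨ẽ,ρ⟩ = 0 and ⟨e,ρ̃⟩ = 0; (2) ρ = ρ̃. -/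
/- STATEMENT 1: Two vertical-type derivations `D_{e,ρ,φ}` and `D_{e',ρ',φ'}`
(with `⟨e,ρ⟩ = ⟨e',ρ'⟩ = −1`, `φ, φ' ≠ 0`) commute on `B = K(t)[ℤⁿ]` iff
either `⟨e',ρ⟩ = 0 = ⟨e,ρ'⟩` or `ρ = ρ'`. -/

noncomputable section

/-- standard pairing `⟨m,v⟩ = Σᵢ mᵢ vᵢ` on `ℤⁿ`. -/
def pairZ {n : ℕ} (m v : Fin n → ℤ) : ℤ := ∑ i, m i * v i

/-- Vertical-type derivation `D_{e,ρ,φ}` on the group algebra `B = K(t)[ℤⁿ]`,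
the `K(t)`-linear map determined by `f·χ^m ↦ ⟨m,ρ⟩·φ·f·χ^{m+e}`. -/
def Dvert {K : Type*} [Field K] {n : ℕ} (e ρ : Fin n → ℤ) (φ : RatFunc K)
    (b : (Fin n → ℤ) →₀ RatFunc K) : (Fin n → ℤ) →₀ RatFunc K :=
  b.sum fun m f => Finsupp.single (m + e) ((pairZ m ρ : RatFunc K) * φ * f)


/-!
Both composites send `f·χ^m` to a multiple of `f·φ·φ'·χ^{m+e+e'}`; the two coefficients differ by
`⟨e',ρ⟩⟨m,ρ'⟩ - ⟨e,ρ'⟩⟨m,ρ⟩`, so the derivations commute iff `⟨e',ρ⟩ • ρ' = ⟨e,ρ'⟩ • ρ`.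
Pairing this vector identity with `e` and with `e'` forces `⟨e',ρ⟩ = ⟨e,ρ'⟩ ∈ {0, -1}`,
and the value `-1` gives `ρ = ρ'`.
-/

open Matrix

section Pairing

variable {n : ℕ}

lemma pairZ_eq_dotProduct (m v : Fin n → ℤ) : pairZ m v = m ⬝ᵥ v := rfl

lemma pairZ_add_left (m m' v : Fin n → ℤ) : pairZ (m + m') v = pairZ m v + pairZ m' v :=
  add_dotProduct m m' v

lemma forall_mul_pairZ_eq_iff (a b : ℤ) (v w : Fin n → ℤ) :
    (∀ m, a * pairZ m v = b * pairZ m w) ↔ a • v = b • w := by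
  simp only [pairZ_eq_dotProduct, ← smul_eq_mul, ← dotProduct_smul, dotProduct_comm _ (_ • _)]
  exact dotProduct_eq_iff

lemma smul_eq_smul_iff_of_pairZ_eq_neg_one {e ρ e' ρ' : Fin n → ℤ}
    (he : pairZ e ρ = -1) (he' : pairZ e' ρ' = -1) :
    pairZ e' ρ • ρ' = pairZ e ρ' • ρ ↔ (pairZ e' ρ = 0 ∧ pairZ e ρ' = 0) ∨ ρ = ρ' := by
  set a := pairZ e' ρ
  set b := pairZ e ρ'
  constructor
  · intro h
    have hpair := (forall_mul_pairZ_eq_iff a b ρ' ρ).2 h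
    have hb : a * b = -b := by simpa [he] using hpair e
    have ha : -a = b * a := by simpa [he'] using hpair e'
    have hab : a = b := by linarith [mul_comm a b]
    obtain ha0 | ha1 : a = 0 ∨ a + 1 = 0 := mul_eq_zero.1 (by linear_combination -ha + a * hab)
    · exact Or.inl ⟨ha0, hab ▸ ha0⟩
    · have hneg : a = -1 := by linarith
      rw [← hab, hneg, neg_one_smul, neg_one_smul, neg_inj] at h
      exact Or.inr h.symm
  · rintro (⟨ha, hb⟩ | rfl)
    · rw [ha, hb, zero_smul, zero_smul]
    · simp only [a, b, he, he']

end Pairing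

section Dvert

variable {K : Type*} [Field K] {n : ℕ} (e ρ : Fin n → ℤ) (φ : RatFunc K)

lemma Dvert_single (m : Fin n → ℤ) (f : RatFunc K) :
    Dvert e ρ φ (Finsupp.single m f) = Finsupp.single (m + e) ((pairZ m ρ : RatFunc K) * φ * f) :=
  Finsupp.sum_single_index (by simp)

lemma Dvert_zero : Dvert e ρ φ 0 = 0 := Finsupp.sum_zero_index

lemma Dvert_add (b c : (Fin n → ℤ) →₀ RatFunc K) :
    Dvert e ρ φ (b + c) = Dvert e ρ φ b + Dvert e ρ φ c :=
  Finsupp.sum_add_index' (by simp) (by simp [mul_add, Finsupp.single_add])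

variable (e' ρ' : Fin n → ℤ) (φ' : RatFunc K)

lemma Dvert_Dvert_single (m : Fin n → ℤ) (f : RatFunc K) :
    Dvert e ρ φ (Dvert e' ρ' φ' (Finsupp.single m f)) =
      Finsupp.single (m + e + e')
        (((pairZ (m + e') ρ * pairZ m ρ' : ℤ) : RatFunc K) * (φ * φ' * f)) := by
  rw [Dvert_single, Dvert_single, add_right_comm]
  congr 1
  push_cast
  ring

variable [CharZero K] {φ φ'}

lemma Dvert_comm_single_iff (hφ : φ ≠ 0) (hφ' : φ' ≠ 0) (m : Fin n → ℤ) {f : RatFunc K}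
    (hf : f ≠ 0) :
    Dvert e ρ φ (Dvert e' ρ' φ' (Finsupp.single m f)) =
        Dvert e' ρ' φ' (Dvert e ρ φ (Finsupp.single m f)) ↔
      pairZ e' ρ * pairZ m ρ' = pairZ e ρ' * pairZ m ρ := by
  rw [Dvert_Dvert_single, Dvert_Dvert_single, add_right_comm m e' e, mul_comm φ' φ,
    (Finsupp.single_injective _).eq_iff, mul_left_inj' (by positivity), Int.cast_inj,
    pairZ_add_left, pairZ_add_left]
  constructor <;> intro h <;> linear_combination h

lemma Dvert_comm_iff (hφ : φ ≠ 0) (hφ' : φ' ≠ 0) :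
    (∀ b, Dvert e ρ φ (Dvert e' ρ' φ' b) = Dvert e' ρ' φ' (Dvert e ρ φ b)) ↔
      ∀ m, pairZ e' ρ * pairZ m ρ' = pairZ e ρ' * pairZ m ρ := by
  refine ⟨fun h m => (Dvert_comm_single_iff e ρ e' ρ' hφ hφ' m one_ne_zero).1 (h _),
    fun h b => ?_⟩
  induction b using Finsupp.induction_linear with
  | zero => simp only [Dvert_zero]
  | add b c hb hc => simp only [Dvert_add, hb, hc]
  | single m f =>
    rcases eq_or_ne f 0 with rfl | hf
    · simp only [Finsupp.single_zero, Dvert_zero]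
    · exact (Dvert_comm_single_iff e ρ e' ρ' hφ hφ' m hf).2 (h m)

end Dvert

theorem vertical_derivations_commute_iff_general
    {K : Type*} [Field K] [CharZero K] {n : ℕ}
    (e ρ e' ρ' : Fin n → ℤ) (φ φ' : RatFunc K)
    (he : pairZ e ρ = -1) (he' : pairZ e' ρ' = -1)
    (hφ : φ ≠ 0) (hφ' : φ' ≠ 0) :
    (∀ b : (Fin n → ℤ) →₀ RatFunc K,
        Dvert e ρ φ (Dvert e' ρ' φ' b) = Dvert e' ρ' φ' (Dvert e ρ φ b))
    ↔ (pairZ e' ρ = 0 ∧ pairZ e ρ' = 0) ∨ ρ = ρ' := by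
  rw [Dvert_comm_iff e ρ e' ρ' hφ hφ', forall_mul_pairZ_eq_iff,
    smul_eq_smul_iff_of_pairZ_eq_neg_one he he']

theorem vertical_derivations_commute_iff
    {K : Type*} [Field K] [IsAlgClosed K] [CharZero K] {n : ℕ} (hn : 1 ≤ n)
    (e ρ e' ρ' : Fin n → ℤ) (φ φ' : RatFunc K)
    (he : pairZ e ρ = -1) (he' : pairZ e' ρ' = -1)
    (hφ : φ ≠ 0) (hφ' : φ' ≠ 0) :
    (∀ b : (Fin n → ℤ) →₀ RatFunc K,
        Dvert e ρ φ (Dvert e' ρ' φ' b) = Dvert e' ρ' φ' (Dvert e ρ φ b))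
    ↔ (pairZ e' ρ = 0 ∧ pairZ e ρ' = 0) ∨ ρ = ρ' :=
  vertical_derivations_commute_iff_general e ρ e' ρ' φ φ' he he' hφ hφ'
end
end

section
/- Let K be an algebraically closed field of characteristic zero and consider the polynomial algebra K[x,y] with the ℤ-grading for which x is homogeneous of degree 1 and y is homogeneous of degree −1 (the component of degree j is spanned by the monomials x^p y^q with p − q = j). Then every nonzero locally nilpotent derivation ∂ of K[x,y] that is homogeneous with respect to this grading is of the form ∂ = c·x^a·∂/∂y for some c ∈ K∖{0} and integer a ≥ 0, or of the form ∂ = c·y^b·∂/∂x for some c ∈ K∖{0} and integer b ≥ 0. -/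
/-! For a locally nilpotent derivation `D` of a domain of characteristic zero, the degree
`deg_D a = max {n | D^[n] a ≠ 0}` (`HasNilDegree`) is additive on products by the general
Leibniz rule. Hence `a ∣ D a` forces `D a = 0`, since otherwise `deg_D (D a) = deg_D a - 1`
would be at least `deg_D a`.

If `D` is homogeneous of degree `k`, then `D x` has weight `1 + k` and `D y` has weight `k - 1`.
For `k ≥ 0` every monomial of `D x` contains `x`, and for `k < 0` every monomial of `D y`
contains `y`; so `D x = 0` or `D y = 0`. If `D x = 0`, then `D = q ∂/∂y` with `q = D y`, and
`q ∣ D q = q ∂q/∂y` gives `∂q/∂y = 0`: `q` is a homogeneous polynomial in `x` alone, i.e. a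
monomial `c x^a`. -/

noncomputable section
open MvPolynomial

namespace Derivation

open Finset

variable {R A : Type*} [CommSemiring R] [CommRing A] [Algebra R A] (D : Derivation R A A)

theorem iterate_map_mul (n : ℕ) (a b : A) :
    (⇑D)^[n] (a * b) = ∑ ij ∈ antidiagonal n, n.choose ij.1 • ((⇑D)^[ij.1] a * (⇑D)^[ij.2] b) := by
  induction n with
  | zero => simp
  | succ n ih =>
    rw [sum_antidiagonal_choose_succ_nsmul (M := A) (fun i j => (⇑D)^[i] a * (⇑D)^[j] b) n]
    simp only [Function.iterate_succ_apply', ih, map_sum, map_nsmul, leibniz, smul_eq_mul,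
      smul_add, sum_add_distrib]
    congr 1
    refine sum_congr rfl fun ⟨i, j⟩ hij ↦ ?_
    rw [n.choose_symm_of_eq_add (HasAntidiagonal.mem_antidiagonal.1 hij).symm]
    ring

def IsLocallyNilpotent : Prop := ∀ a : A, ∃ n : ℕ, (⇑D)^[n] a = 0

def HasNilDegree (a : A) (n : ℕ) : Prop := (⇑D)^[n] a ≠ 0 ∧ (⇑D)^[n + 1] a = 0

variable {D}

theorem iterate_eq_zero_of_le {a : A} {m n : ℕ} (h : (⇑D)^[m] a = 0) (hmn : m ≤ n) :
    (⇑D)^[n] a = 0 := by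
  obtain ⟨k, rfl⟩ := Nat.exists_eq_add_of_le hmn
  rw [add_comm, Function.iterate_add_apply, h, Function.iterate_fixed (map_zero D)]

theorem HasNilDegree.unique {a : A} {m n : ℕ} (hm : D.HasNilDegree a m) (hn : D.HasNilDegree a n) :
    m = n := by
  by_contra hne
  rcases Nat.lt_or_gt_of_ne hne with h | h
  · exact hn.1 (iterate_eq_zero_of_le hm.2 h)
  · exact hm.1 (iterate_eq_zero_of_le hn.2 h)

theorem hasNilDegree_apply_iff {a : A} {n : ℕ} :
    D.HasNilDegree (D a) n ↔ D.HasNilDegree a (n + 1) := by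
  simp only [HasNilDegree, ← Function.iterate_succ_apply]

theorem IsLocallyNilpotent.exists_hasNilDegree (hD : D.IsLocallyNilpotent) {a : A} (ha : a ≠ 0) :
    ∃ n, D.HasNilDegree a n := by
  classical
  have h : ∃ n, (⇑D)^[n + 1] a = 0 := (hD a).imp fun n hn => iterate_eq_zero_of_le hn n.le_succ
  refine ⟨Nat.find h, ?_, Nat.find_spec h⟩
  cases hfind : Nat.find h with
  | zero => exact ha
  | succ n => exact Nat.find_min h (hfind ▸ n.lt_succ_self)

theorem HasNilDegree.mul [IsDomain A] [CharZero A] {a b : A} {m n : ℕ}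
    (ha : D.HasNilDegree a m) (hb : D.HasNilDegree b n) : D.HasNilDegree (a * b) (m + n) := by
  have vanish : ∀ i j, m < i ∨ n < j → (⇑D)^[i] a * (⇑D)^[j] b = 0 := by
    rintro i j (hi | hj)
    · rw [iterate_eq_zero_of_le ha.2 hi, zero_mul]
    · rw [iterate_eq_zero_of_le hb.2 hj, mul_zero]
  constructor
  · rw [iterate_map_mul, sum_eq_single_of_mem (m, n) (HasAntidiagonal.mem_antidiagonal.2 rfl)]
    · exact smul_ne_zero (Nat.choose_pos (by omega)).ne' (mul_ne_zero ha.1 hb.1)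
    · rintro ⟨i, j⟩ hij hne
      rw [HasAntidiagonal.mem_antidiagonal] at hij
      rw [vanish i j (by grind), smul_zero]
  · refine (iterate_map_mul D _ a b).trans (sum_eq_zero fun ⟨i, j⟩ hij => ?_)
    rw [HasAntidiagonal.mem_antidiagonal] at hij
    rw [vanish i j (by omega), smul_zero]

theorem IsLocallyNilpotent.eq_zero_of_dvd_apply [IsDomain A] [CharZero A]
    (hD : D.IsLocallyNilpotent) {a : A} (h : a ∣ D a) : D a = 0 := by
  by_contra hDa
  obtain ⟨b, hb⟩ := h
  have hb0 : b ≠ 0 := by rintro rfl; exact hDa (hb.trans (mul_zero a))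
  obtain ⟨m, hm⟩ := hD.exists_hasNilDegree hDa
  obtain ⟨n, hn⟩ := hD.exists_hasNilDegree hb0
  have := ((hasNilDegree_apply_iff.1 hm).mul hn).unique (hb ▸ hm)
  omega

theorem IsLocallyNilpotent.apply_eq_zero_of_smul [IsDomain A] [CharZero A] {E : Derivation R A A}
    {q : A} (hD : (q • E).IsLocallyNilpotent) (hq : q ≠ 0) : E q = 0 := by
  have h : (q • E) q = q * E q := rfl
  exact (mul_eq_zero.1 (h ▸ hD.eq_zero_of_dvd_apply (h ▸ dvd_mul_right q (E q)))).resolve_left hq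

end Derivation

namespace MvPolynomial

variable {σ R : Type*} [CommRing R]

theorem X_dvd_of_forall_mem_support {i : σ} {p : MvPolynomial σ R}
    (h : ∀ d ∈ p.support, d i ≠ 0) : X i ∣ p :=
  p.as_sum ▸ Finset.dvd_sum fun d hd => X_dvd_monomial.2 (Or.inr (h d hd))

theorem apply_eq_zero_of_mem_support_of_pderiv_eq_zero [IsDomain R] [CharZero R] {i : σ}
    {p : MvPolynomial σ R} (h : pderiv i p = 0) {d : σ →₀ ℕ} (hd : d ∈ p.support) : d i = 0 := by
  by_contra hdi
  have hle : Finsupp.single i 1 ≤ d := Finsupp.single_le_iff.2 (Nat.one_le_iff_ne_zero.2 hdi)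
  have := coeff_pderiv (i := i) p (d - Finsupp.single i 1)
  rw [tsub_add_cancel_of_le hle, h, coeff_zero] at this
  exact mul_ne_zero (mem_support_iff.1 hd) (Nat.cast_add_one_ne_zero _)
    (by exact_mod_cast this.symm)

end MvPolynomial

section Plane

theorem weight_one_neg_one (d : Fin 2 →₀ ℕ) :
    Finsupp.weight (![1, -1] : Fin 2 → ℤ) d = d 0 - d 1 := by
  simp [Finsupp.weight_eq_sum, Fin.sum_univ_two, sub_eq_add_neg]

variable {K : Type*} [Field K] [CharZero K]

theorem eq_C_mul_X_pow_of_pderiv_eq_zero {i j : Fin 2} (hij : i ≠ j) {w : Fin 2 → ℤ} (hw : w i ≠ 0)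
    {m : ℤ} {p : MvPolynomial (Fin 2) K} (hp : p.IsWeightedHomogeneous w m) (hp0 : p ≠ 0)
    (h : pderiv j p = 0) : ∃ c ≠ 0, ∃ a : ℕ, p = C c * X i ^ a := by
  have hsingle : ∀ d ∈ p.support, d = Finsupp.single i (d i) := fun d hd => by
    ext l
    rcases (by omega : l = i ∨ l = j) with rfl | rfl
    · simp
    · simp [apply_eq_zero_of_mem_support_of_pderiv_eq_zero h hd, hij.symm]
  obtain ⟨d₀, hd₀⟩ := support_nonempty.2 hp0
  have hdeg : ∀ d ∈ p.support, d = Finsupp.single i (d₀ i) := fun d hd => by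
    have hw' : (d i : ℤ) * w i = d₀ i * w i := by
      have := (hp (mem_support_iff.1 hd)).trans (hp (mem_support_iff.1 hd₀)).symm
      rwa [hsingle d hd, hsingle d₀ hd₀, Finsupp.weight_single, Finsupp.weight_single,
        nsmul_eq_mul, nsmul_eq_mul] at this
    rw [hsingle d hd, Nat.cast_injective (mul_right_cancel₀ hw hw')]
  exact ⟨_, mem_support_iff.1 (hsingle d₀ hd₀ ▸ hd₀), d₀ i,
    (eq_monomial_of_support_subset_singleton hdeg).trans C_mul_X_pow_eq_monomial.symm⟩

theorem exists_eq_C_mul_X_pow_smul_pderiv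
    {D : Derivation K (MvPolynomial (Fin 2) K) (MvPolynomial (Fin 2) K)}
    (hlnd : D.IsLocallyNilpotent) (hD : D ≠ 0) {i j : Fin 2} (hij : i ≠ j) (hDi : D (X i) = 0)
    {w : Fin 2 → ℤ} (hw : w i ≠ 0) {m : ℤ} (hDj : (D (X j)).IsWeightedHomogeneous w m) :
    ∃ c ≠ 0, ∃ a : ℕ, D = (C c * X i ^ a : MvPolynomial (Fin 2) K) • pderiv j := by
  have hsmul : D = D (X j) • pderiv j := derivation_ext fun l => by
    rcases (by omega : l = i ∨ l = j) with rfl | rfl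
    · simp [hDi, pderiv_X_of_ne hij]
    · simp
  have hDj0 : D (X j) ≠ 0 := fun h => hD (by simpa [h] using hsmul)
  obtain ⟨c, hc, a, ha⟩ := eq_C_mul_X_pow_of_pderiv_eq_zero hij hw hDj hDj0
    ((hsmul ▸ hlnd).apply_eq_zero_of_smul hDj0)
  exact ⟨c, hc, a, ha ▸ hsmul⟩

end Plane

theorem homogeneous_lnd_on_plane_general
    {K : Type*} [Field K] [CharZero K]
    (D : Derivation K (MvPolynomial (Fin 2) K) (MvPolynomial (Fin 2) K))
    (hD : D ≠ 0)
    (hln : ∀ f : MvPolynomial (Fin 2) K, ∃ N : ℕ, 0 < N ∧ (⇑D)^[N] f = 0)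
    (hhom : ∃ k : ℤ, ∀ (j : ℤ) (f : MvPolynomial (Fin 2) K),
      f ∈ weightedHomogeneousSubmodule K (![1, -1] : Fin 2 → ℤ) j →
        D f ∈ weightedHomogeneousSubmodule K (![1, -1] : Fin 2 → ℤ) (j + k)) :
    (∃ c : K, c ≠ 0 ∧ ∃ a : ℕ,
        D = ((C c * X 0 ^ a : MvPolynomial (Fin 2) K)) • (pderiv (R := K) (1 : Fin 2)))
    ∨ (∃ c : K, c ≠ 0 ∧ ∃ b : ℕ,
        D = ((C c * X 1 ^ b : MvPolynomial (Fin 2) K)) • (pderiv (R := K) (0 : Fin 2))) := by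
  have hlnd : D.IsLocallyNilpotent := fun f => (hln f).imp fun _ => And.right
  obtain ⟨k, hk⟩ := hhom
  have hx : (D (X 0)).IsWeightedHomogeneous ![1, -1] (1 + k) :=
    hk 1 (X 0) (isWeightedHomogeneous_X K _ 0)
  have hy : (D (X 1)).IsWeightedHomogeneous ![1, -1] (-1 + k) :=
    hk (-1) (X 1) (isWeightedHomogeneous_X K _ 1)
  rcases le_or_gt 0 k with hk0 | hk0
  · have hDx : D (X 0) = 0 :=
      hlnd.eq_zero_of_dvd_apply <| X_dvd_of_forall_mem_support fun d hd => by
        have := weight_one_neg_one d ▸ hx (mem_support_iff.1 hd)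
        omega
    exact Or.inl (exists_eq_C_mul_X_pow_smul_pderiv hlnd hD (by decide) hDx (by decide) hy)
  · have hDy : D (X 1) = 0 :=
      hlnd.eq_zero_of_dvd_apply <| X_dvd_of_forall_mem_support fun d hd => by
        have := weight_one_neg_one d ▸ hy (mem_support_iff.1 hd)
        omega
    exact Or.inr (exists_eq_C_mul_X_pow_smul_pderiv hlnd hD (by decide) hDy (by decide) hx)

theorem homogeneous_lnd_on_plane
    {K : Type*} [Field K] [IsAlgClosed K] [CharZero K]
    (D : Derivation K (MvPolynomial (Fin 2) K) (MvPolynomial (Fin 2) K))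
    (hD : D ≠ 0)
    (hln : ∀ f : MvPolynomial (Fin 2) K, ∃ N : ℕ, 0 < N ∧ (⇑D)^[N] f = 0)
    (hhom : ∃ k : ℤ, ∀ (j : ℤ) (f : MvPolynomial (Fin 2) K),
      f ∈ weightedHomogeneousSubmodule K (![1, -1] : Fin 2 → ℤ) j →
        D f ∈ weightedHomogeneousSubmodule K (![1, -1] : Fin 2 → ℤ) (j + k)) :
    (∃ c : K, c ≠ 0 ∧ ∃ a : ℕ,
        D = ((C c * X 0 ^ a : MvPolynomial (Fin 2) K)) • (pderiv (R := K) (1 : Fin 2)))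
    ∨ (∃ c : K, c ≠ 0 ∧ ∃ b : ℕ,
        D = ((C c * X 1 ^ b : MvPolynomial (Fin 2) K)) • (pderiv (R := K) (0 : Fin 2))) :=
  homogeneous_lnd_on_plane_general D hD hln hhom
end
end
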